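/- arXiv:1906.07731 — 6 statements merged into one kernel-verified Lean document; each statement's English description precedes it below -/
import Mathlib

section
/- Let d ≥ 1 and let Σ be a d × d diagonal complex matrix with nonnegative real diagonal entries σ_1, …, σ_d satisfying Σ_i σ_i² = 1. Then every unitary U admits a unitary V with U * Σ = Σ * Vᵀ (i.e., for every U in the unitary group there exists V in the unitary group satisfying this equation) if and only if Σ = (1/√d) • 1, i.e., all Schmidt coefficients are equal. -/
/-! If `U * Σ = Σ * W` with `W` unitary, then `U (Σ Σᴴ) Uᴴ = Σ W Wᴴ Σᴴ = Σ Σᴴ`, so `U` commutes with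
`Σ Σᴴ = diagonal σ²`. Taking for `U` the permutation matrix of a transposition `(i j)` forces
`σ_i² = σ_j²`, and the normalization fixes the common value `1/√d`. Conversely, a scalar `Σ` is
intertwined by `V = Uᵀ`. -/

open Matrix

namespace Matrix

variable {n α : Type*} [Fintype n] [DecidableEq n]

theorem permMatrix_mem_unitaryGroup [CommRing α] [StarRing α] (e : Equiv.Perm n) :
    e.permMatrix α ∈ unitaryGroup n α := by
  rw [mem_unitaryGroup_iff, star_eq_conjTranspose, conjTranspose_permMatrix, ← permMatrix_mul,
    inv_mul_cancel, permMatrix_one]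

theorem apply_eq_of_commute_diagonal_swap [CommRing α] {f : n → α} {i j : n}
    (h : Commute ((Equiv.swap i j).permMatrix α) (diagonal f)) : f i = f j := by
  simpa [PEquiv.toMatrix_apply, Equiv.toPEquiv_apply, diagonal_apply, Equiv.swap_apply_def,
    eq_comm] using congr_fun (congr_fun h.eq i) j

theorem commute_mul_conjTranspose_of_mul_eq_mul [CommRing α] [StarRing α] {U W S : Matrix n n α}
    (hU : U ∈ unitaryGroup n α) (hW : W ∈ unitaryGroup n α) (h : U * S = S * W) :
    Commute U (S * Sᴴ) := by
  have hUU : Uᴴ * U = 1 := mem_unitaryGroup_iff'.mp hU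
  have hWW : W * Wᴴ = 1 := mem_unitaryGroup_iff.mp hW
  have hconj : U * (S * Sᴴ) * Uᴴ = S * Sᴴ := by
    calc U * (S * Sᴴ) * Uᴴ = (U * S) * (U * S)ᴴ := by
          simp only [conjTranspose_mul, Matrix.mul_assoc]
      _ = S * (W * Wᴴ) * Sᴴ := by simp only [h, conjTranspose_mul, Matrix.mul_assoc]
      _ = S * Sᴴ := by rw [hWW, Matrix.mul_one]
  calc U * (S * Sᴴ) = U * (S * Sᴴ) * (Uᴴ * U) := by
        rw [hUU, Matrix.mul_one]
    _ = S * Sᴴ * U := by rw [← Matrix.mul_assoc, hconj]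

end Matrix

theorem eq_one_div_sqrt_card_of_sum_sq_eq_one {ι : Type*} [Fintype ι] {σ : ι → ℝ}
    (hσ : ∀ i, 0 ≤ σ i) (hconst : ∀ i j, σ i = σ j) (hnorm : ∑ i, σ i ^ 2 = 1) (i : ι) :
    σ i = 1 / Real.sqrt (Fintype.card ι) := by
  have hcard : (Fintype.card ι : ℝ) * σ i ^ 2 = 1 := by
    simp [← hnorm, hconst _ i]
  have hpos : (0 : ℝ) < Fintype.card ι := by
    rcases (Fintype.card ι).eq_zero_or_pos with h | h
    · simp [h] at hcard
    · exact_mod_cast h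
  rw [eq_div_iff (Real.sqrt_pos.mpr hpos).ne', ← Real.sqrt_sq (hσ i), ← Real.sqrt_mul (sq_nonneg _),
    mul_comm, hcard, Real.sqrt_one]

theorem unitary_related_operation_iff_maximally_entangled_general
    {d : ℕ} (σ : Fin d → ℝ)
    (hσ : ∀ i, 0 ≤ σ i) (hnorm : ∑ i, σ i ^ 2 = 1)
    (S : Matrix (Fin d) (Fin d) ℂ) (hS : S = Matrix.diagonal (fun i => (σ i : ℂ))) :
    (∀ U ∈ Matrix.unitaryGroup (Fin d) ℂ,
        ∃ V ∈ Matrix.unitaryGroup (Fin d) ℂ, U * S = S * Vᵀ) ↔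
      S = ((1 / Real.sqrt d : ℝ) : ℂ) • (1 : Matrix (Fin d) (Fin d) ℂ) := by
  subst hS
  constructor
  · intro h
    have hSS : diagonal (fun i => (σ i : ℂ)) * (diagonal fun i => (σ i : ℂ))ᴴ =
        diagonal fun i => ((σ i ^ 2 : ℝ) : ℂ) := by
      simp [diagonal_conjTranspose, diagonal_mul_diagonal, sq]
    have hconst (i j : Fin d) : σ i = σ j := by
      obtain ⟨V, hV, hUV⟩ := h _ (permMatrix_mem_unitaryGroup (Equiv.swap i j))
      have hcomm := commute_mul_conjTranspose_of_mul_eq_mul (permMatrix_mem_unitaryGroup _)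
        (transpose_mem_unitaryGroup_iff.mpr hV) hUV
      rw [hSS] at hcomm
      exact (pow_left_inj₀ (hσ i) (hσ j) two_ne_zero).mp <| Complex.ofReal_injective <|
        apply_eq_of_commute_diagonal_swap (f := fun k => ((σ k ^ 2 : ℝ) : ℂ)) hcomm
    have hval := eq_one_div_sqrt_card_of_sum_sq_eq_one hσ hconst hnorm
    rw [Fintype.card_fin] at hval
    simp [smul_one_eq_diagonal, hval]
  · intro hmax U hU
    refine ⟨Uᵀ, transpose_mem_unitaryGroup_iff.mpr hU, ?_⟩
    rw [hmax, transpose_transpose, mul_smul_comm, smul_mul, Matrix.mul_one, Matrix.one_mul]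

/-- For a normalized Schmidt-coefficient matrix `S = diagonal σ`
(with `σ_i ≥ 0` and `∑ σ_i² = 1`), every unitary `U` on subsystem `A` admits a unitary
related operation `V` on subsystem `B` (i.e. `U * S = S * Vᵀ`) iff the state is maximally
entangled, `S = (1/√d) • 1`. -/
theorem unitary_related_operation_iff_maximally_entangled
    {d : ℕ} (hd : 1 ≤ d) (σ : Fin d → ℝ)
    (hσ : ∀ i, 0 ≤ σ i) (hnorm : ∑ i, σ i ^ 2 = 1)
    (S : Matrix (Fin d) (Fin d) ℂ) (hS : S = Matrix.diagonal (fun i => (σ i : ℂ))) :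
    (∀ U ∈ Matrix.unitaryGroup (Fin d) ℂ,
        ∃ V ∈ Matrix.unitaryGroup (Fin d) ℂ, U * S = S * Vᵀ) ↔
      S = ((1 / Real.sqrt d : ℝ) : ℂ) • (1 : Matrix (Fin d) (Fin d) ℂ) :=
  unitary_related_operation_iff_maximally_entangled_general σ hσ hnorm S hS
end

section
/- Let C be a nonzero d_A × d_B complex matrix with rank C < d_B. Then there exists a d_B × d_B complex matrix V such that for every d_A × d_A complex matrix U, U * C ≠ C * Vᵀ. (An action on the larger subsystem B cannot, in general, be replicated by any action on the smaller subsystem A.) -/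
open Matrix

/-! A rank below `d_B` gives a nonzero `v` with `C v = 0`, while `C ≠ 0` gives a `w` with
`C w ≠ 0`. Take `V` with `Vᵀ v = w`. If `U C = C Vᵀ`, then applying both sides to `v` gives
`0 = U (C v) = C (Vᵀ v) = C w`, a contradiction. -/

namespace Matrix

variable {m n K : Type*} [Fintype n]

theorem exists_mulVec_ne_zero_of_ne_zero [Semiring K] {A : Matrix m n K} (hA : A ≠ 0) :
    ∃ w, A *ᵥ w ≠ 0 := by
  by_contra! h
  exact hA (mulVec_injective (funext fun w => by rw [h w, zero_mulVec]))

variable [Field K]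

theorem exists_ne_zero_mulVec_eq_zero_of_rank_lt_card {A : Matrix m n K}
    (h : A.rank < Fintype.card n) : ∃ v ≠ 0, A *ᵥ v = 0 := by
  have rank_add_nullity := A.mulVecLin.finrank_range_add_finrank_ker
  rw [Module.finrank_fintype_fun_eq_card] at rank_add_nullity
  have hker : LinearMap.ker A.mulVecLin ≠ ⊥ :=
    Submodule.one_le_finrank_iff.mp (by rw [rank] at h; omega)
  obtain ⟨v, hv, hv0⟩ := Submodule.exists_mem_ne_zero_of_ne_bot hker
  exact ⟨v, hv0, hv⟩

theorem exists_mulVec_eq_of_ne_zero {v : n → K} (hv : v ≠ 0) (w : m → K) :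
    ∃ M : Matrix m n K, M *ᵥ v = w := by
  classical
  obtain ⟨i, hi⟩ := Function.ne_iff.mp hv
  refine ⟨vecMulVec w (Pi.single i (v i)⁻¹), ?_⟩
  rw [vecMulVec_mulVec, single_dotProduct, inv_mul_cancel₀ hi, MulOpposite.op_one, one_smul]

end Matrix

/-- If the coefficient matrix `C` is nonzero and its rank is less than `d_B`,
then there is a local operation `V` on the larger subsystem `B` whose action cannot be
replicated by any local operation `U` on subsystem `A`. -/
theorem operation_on_larger_subsystem_not_replicable
    {dA dB : ℕ} (C : Matrix (Fin dA) (Fin dB) ℂ)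
    (hC : C ≠ 0) (hrank : C.rank < dB) :
    ∃ V : Matrix (Fin dB) (Fin dB) ℂ,
      ∀ U : Matrix (Fin dA) (Fin dA) ℂ, U * C ≠ C * Vᵀ := by
  obtain ⟨v, hv0, hv⟩ :=
    exists_ne_zero_mulVec_eq_zero_of_rank_lt_card (by rwa [Fintype.card_fin])
  obtain ⟨w, hw⟩ := exists_mulVec_ne_zero_of_ne_zero hC
  obtain ⟨M, hM⟩ := exists_mulVec_eq_of_ne_zero hv0 w
  refine ⟨Mᵀ, fun U hU => hw ?_⟩
  calc C *ᵥ w = (C * Mᵀᵀ) *ᵥ v := by rw [transpose_transpose, ← mulVec_mulVec, hM]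
    _ = U *ᵥ (C *ᵥ v) := by rw [← hU, mulVec_mulVec]
    _ = 0 := by rw [hv, mulVec_zero]
end

section
/- Let C be an invertible d × d complex matrix, let ψ : Matrix (Fin d × Fin d) (Fin 1) ℂ be the column vector with ψ (i, j) 0 = C i j, and let ρ = ψ * ψᴴ. For any finite family of d × d matrices K_l, define J_l = (C⁻¹ * K_l * C)ᵀ. Then Σ_l (K_l ⊗ₖ 1) * ρ * (K_l ⊗ₖ 1)ᴴ = Σ_l (1 ⊗ₖ J_l) * ρ * (1 ⊗ₖ J_l)ᴴ, where ⊗ₖ denotes the Kronecker product. -/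
/-!
Writing the pure state as `ψ = vec Cᵀ`, the Kronecker–vec identity gives
`(K ⊗ₖ 1) ψ = vec (K C)ᵀ` and `(1 ⊗ₖ J) ψ = vec (C Jᵀ)ᵀ`. The choice `Jᵀ = C⁻¹ K C` makes
`C Jᵀ = K C`, so each Kraus operator on `A` and its partner on `B` send `ψ` to the same vector,
hence act identically on `ρ = ψ ψᴴ`, term by term.
-/

open Matrix Kronecker

namespace Matrix

variable {ι m n R : Type*}

theorem mul_mul_conjTranspose_eq_of_mul_eq [Fintype m] [Fintype ι] [Semiring R] [StarRing R]
    {M N : Matrix n m R} {ψ : Matrix m ι R} (h : M * ψ = N * ψ) :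
    M * (ψ * ψᴴ) * Mᴴ = N * (ψ * ψᴴ) * Nᴴ := by
  calc M * (ψ * ψᴴ) * Mᴴ = M * ψ * (M * ψ)ᴴ := by simp only [conjTranspose_mul, Matrix.mul_assoc]
    _ = N * ψ * (N * ψ)ᴴ := by rw [h]
    _ = N * (ψ * ψᴴ) * Nᴴ := by simp only [conjTranspose_mul, Matrix.mul_assoc]

section

variable [Fintype n] [DecidableEq n] [CommSemiring R]

theorem kronecker_one_mulVec_vec_transpose (A X : Matrix n n R) :
    (A ⊗ₖ (1 : Matrix n n R)) *ᵥ vec Xᵀ = vec (A * X)ᵀ := by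
  rw [kronecker_mulVec_vec, Matrix.one_mul, transpose_mul]

theorem one_kronecker_mulVec_vec_transpose (B X : Matrix n n R) :
    ((1 : Matrix n n R) ⊗ₖ B) *ᵥ vec Xᵀ = vec (X * Bᵀ)ᵀ := by
  rw [kronecker_mulVec_vec, transpose_one, Matrix.mul_one, transpose_mul, transpose_transpose]

theorem kronecker_one_mul_replicateCol_vec_transpose {A B X : Matrix n n R}
    (h : A * X = X * Bᵀ) :
    (A ⊗ₖ (1 : Matrix n n R)) * replicateCol ι (vec Xᵀ) =
      ((1 : Matrix n n R) ⊗ₖ B) * replicateCol ι (vec Xᵀ) := by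
  rw [← replicateCol_mulVec, ← replicateCol_mulVec, kronecker_one_mulVec_vec_transpose,
    one_kronecker_mulVec_vec_transpose, h]

end

end Matrix

/-- For a fully entangled pure state of two `d`-dimensional qudits with
invertible coefficient matrix `C`, represented by the column vector `ψ` with
`ψ (i,j) 0 = C i j` and density matrix `ρ = ψ * ψᴴ`, any Kraus operators `K_l` on
subsystem `A` are equivalent to the related Kraus operators `J_l = (C⁻¹ * K_l * C)ᵀ`
on subsystem `B`:
`∑_l (K_l ⊗ₖ 1) ρ (K_l ⊗ₖ 1)ᴴ = ∑_l (1 ⊗ₖ J_l) ρ (1 ⊗ₖ J_l)ᴴ`. -/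
theorem related_kraus_operators_same_action
    {d n : ℕ} (C : Matrix (Fin d) (Fin d) ℂ) (hC : IsUnit C)
    (ψ : Matrix (Fin d × Fin d) (Fin 1) ℂ)
    (hψ : ∀ i j, ψ (i, j) 0 = C i j)
    (ρ : Matrix (Fin d × Fin d) (Fin d × Fin d) ℂ) (hρ : ρ = ψ * ψᴴ)
    (K : Fin n → Matrix (Fin d) (Fin d) ℂ)
    (J : Fin n → Matrix (Fin d) (Fin d) ℂ)
    (hJ : ∀ l, J l = (C⁻¹ * K l * C)ᵀ) :
    ∑ l, (K l ⊗ₖ (1 : Matrix (Fin d) (Fin d) ℂ)) * ρ *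
        (K l ⊗ₖ (1 : Matrix (Fin d) (Fin d) ℂ))ᴴ =
      ∑ l, ((1 : Matrix (Fin d) (Fin d) ℂ) ⊗ₖ J l) * ρ *
        ((1 : Matrix (Fin d) (Fin d) ℂ) ⊗ₖ J l)ᴴ := by
  have hψ_vec : ψ = replicateCol (Fin 1) (vec Cᵀ) := by
    ext ⟨i, j⟩ k
    rw [Subsingleton.elim k 0, hψ]
    rfl
  have hCJ : ∀ l, K l * C = C * (J l)ᵀ := fun l => by
    rw [hJ, transpose_transpose, Matrix.mul_assoc,
      mul_nonsing_inv_cancel_left C _ ((isUnit_iff_isUnit_det C).mp hC)]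
  refine Finset.sum_congr rfl fun l _ => ?_
  rw [hρ]
  exact mul_mul_conjTranspose_eq_of_mul_eq
    (hψ_vec ▸ kronecker_one_mul_replicateCol_vec_transpose (hCJ l))
end

section
/- For any d × d complex matrix X, the value Tr √(Xᴴ * X) (the trace of the positive semidefinite square root of Xᴴ * X, i.e., the trace norm of X) is the greatest element of the set { |Tr (V * X)| : V ∈ Matrix.unitaryGroup (Fin d) ℂ }; that is, |Tr(V * X)| ≤ Tr √(XᴴX) for every unitary V, and there exists a unitary V attaining equality. -/
/-! Diagonalise `Xᴴ X = U Σ² Uᴴ`. The columns of `X U` are then orthogonal with norms `Σ`, so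
completing their normalisations to an orthonormal basis gives a unitary `W` with `X = W Σ Uᴴ`.
For unitary `V`, `Tr (V X) = Tr (M Σ)` with `M = Uᴴ V W` unitary; the diagonal entries of `M`
have modulus at most `1`, so `|Tr (V X)| ≤ Tr Σ = Tr √(Xᴴ X)`, with equality at `V = U Wᴴ`. -/

open Matrix ComplexOrder

/-- The positive semidefinite square root of a positive semidefinite matrix
(the definition Mathlib had in December 2024, since removed from Mathlib). -/
noncomputable def Matrix.PosSemidef.sqrt {n : Type*} [Fintype n] [DecidableEq n] {𝕜 : Type*}
    [RCLike 𝕜] {A : Matrix n n 𝕜} (hA : A.PosSemidef) : Matrix n n 𝕜 :=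
  (hA.1.eigenvectorUnitary : Matrix n n 𝕜) * diagonal ((↑) ∘ (√·) ∘ hA.1.eigenvalues) *
    (star (hA.1.eigenvectorUnitary : Matrix n n 𝕜))

section InnerProductSpace

variable {𝕜 E ι : Type*} [RCLike 𝕜] [NormedAddCommGroup E] [InnerProductSpace 𝕜 E]

theorem orthonormal_domRestrict_inv_norm_smul_of_pairwise_inner_eq_zero {v : ι → E}
    (hv : Pairwise fun i j => inner 𝕜 (v i) (v j) = 0) :
    Orthonormal 𝕜 ({i | v i ≠ 0}.domRestrict fun i => (‖v i‖⁻¹ : 𝕜) • v i) := by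
  refine ⟨fun ⟨i, hi⟩ => norm_smul_inv_norm hi, fun ⟨i, _⟩ ⟨j, _⟩ hij => ?_⟩
  change inner 𝕜 ((‖v i‖⁻¹ : 𝕜) • v i) ((‖v j‖⁻¹ : 𝕜) • v j) = 0
  rw [inner_smul_left, inner_smul_right, hv (Subtype.coe_ne_coe.mpr hij), mul_zero, mul_zero]

theorem exists_orthonormalBasis_eq_norm_smul_of_pairwise_inner_eq_zero [Fintype ι]
    [FiniteDimensional 𝕜 E] (hcard : Module.finrank 𝕜 E = Fintype.card ι) {v : ι → E}
    (hv : Pairwise fun i j => inner 𝕜 (v i) (v j) = 0) :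
    ∃ b : OrthonormalBasis ι 𝕜 E, ∀ i, v i = (‖v i‖ : 𝕜) • b i := by
  obtain ⟨b, hb⟩ := (orthonormal_domRestrict_inv_norm_smul_of_pairwise_inner_eq_zero hv)
    |>.exists_orthonormalBasis_extension_of_card_eq hcard
  refine ⟨b, fun i => ?_⟩
  by_cases hi : v i = 0
  · simp [hi]
  · rw [hb i hi, smul_inv_smul₀ (by simpa using hi)]

end InnerProductSpace

namespace Matrix

variable {n 𝕜 : Type*} [Fintype n] [DecidableEq n] [RCLike 𝕜]

theorem trace_mul_mul_star_of_mem_unitaryGroup {U : Matrix n n 𝕜} (hU : U ∈ unitaryGroup n 𝕜)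
    (A : Matrix n n 𝕜) : trace (U * A * star U) = trace A := by
  rw [trace_mul_cycle, mem_unitaryGroup_iff'.mp hU, one_mul]

theorem PosSemidef.re_trace_sqrt {A : Matrix n n 𝕜} (hA : A.PosSemidef) :
    RCLike.re hA.sqrt.trace = ∑ i, √(hA.1.eigenvalues i) := by
  rw [PosSemidef.sqrt, trace_mul_mul_star_of_mem_unitaryGroup (Subtype.property _), trace_diagonal,
    map_sum]
  simp

theorem norm_trace_mul_diagonal_le_of_mem_unitaryGroup {M : Matrix n n 𝕜}
    (hM : M ∈ unitaryGroup n 𝕜) {σ : n → ℝ} (hσ : 0 ≤ σ) :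
    ‖trace (M * diagonal fun i => (σ i : 𝕜))‖ ≤ ∑ i, σ i :=
  calc ‖trace (M * diagonal fun i => (σ i : 𝕜))‖ = ‖∑ i, M i i * σ i‖ := by
        simp only [trace, diag_apply, mul_diagonal]
    _ ≤ ∑ i, ‖M i i * σ i‖ := norm_sum_le _ _
    _ ≤ ∑ i, σ i := Finset.sum_le_sum fun i _ => by
        rw [norm_mul, RCLike.norm_ofReal, abs_of_nonneg (hσ i)]
        exact mul_le_of_le_one_left (hσ i) (entry_norm_bound_of_unitary hM i i)

theorem isGreatest_norm_trace_unitary_mul_of_eq_mul_diagonal_mul_star {X W U : Matrix n n 𝕜}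
    (hW : W ∈ unitaryGroup n 𝕜) (hU : U ∈ unitaryGroup n 𝕜) {σ : n → ℝ} (hσ : 0 ≤ σ)
    (hX : X = W * diagonal (fun i => (σ i : 𝕜)) * star U) :
    IsGreatest {r : ℝ | ∃ V ∈ unitaryGroup n 𝕜, r = ‖trace (V * X)‖} (∑ i, σ i) := by
  set D := diagonal fun i => (σ i : 𝕜)
  subst hX
  constructor
  · refine ⟨U * star W, mul_mem hU (Unitary.star_mem hW), ?_⟩
    have hcancel : U * star W * (W * D * star U) = U * D * star U := by
      simp only [Matrix.mul_assoc, ← Matrix.mul_assoc (star W), mem_unitaryGroup_iff'.mp hW,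
        Matrix.one_mul]
    rw [hcancel, trace_mul_mul_star_of_mem_unitaryGroup hU, trace_diagonal, ← RCLike.ofReal_sum,
      RCLike.norm_ofReal, abs_of_nonneg (Finset.sum_nonneg fun i _ => hσ i)]
  · rintro r ⟨V, hV, rfl⟩
    have hcycle : trace (V * (W * D * star U)) = trace (star U * V * W * D) := by
      simp only [Matrix.mul_assoc]
      rw [trace_mul_comm (star U)]
      simp only [Matrix.mul_assoc]
    rw [hcycle]
    exact norm_trace_mul_diagonal_le_of_mem_unitaryGroup
      (mul_mem (mul_mem (Unitary.star_mem hU) hV) hW) hσ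

theorem exists_mem_unitaryGroup_eq_mul_diagonal_of_conjTranspose_mul_self_eq_diagonal
    {Y : Matrix n n 𝕜} {μ : n → ℝ} (hY : Yᴴ * Y = diagonal (RCLike.ofReal ∘ μ)) :
    ∃ W ∈ unitaryGroup n 𝕜, Y = W * diagonal fun j => ((√(μ j) : ℝ) : 𝕜) := by
  let y : n → EuclideanSpace 𝕜 n := fun j => WithLp.toLp 2 fun i => Y i j
  have hinner : ∀ i j, inner 𝕜 (y i) (y j) = (Yᴴ * Y) i j := fun i j => by
    simp [y, PiLp.inner_apply, mul_apply, mul_comm]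
  have horth : Pairwise fun i j => inner 𝕜 (y i) (y j) = 0 := fun i j hij =>
    (hinner i j).trans (by rw [hY, diagonal_apply_ne _ hij])
  have hnorm : ∀ j, ‖y j‖ = √(μ j) := fun j => by
    rw [norm_eq_sqrt_re_inner (𝕜 := 𝕜), hinner, hY, diagonal_apply_eq, Function.comp_apply,
      RCLike.ofReal_re]
  obtain ⟨b, hb⟩ := exists_orthonormalBasis_eq_norm_smul_of_pairwise_inner_eq_zero
    (by simp) horth
  refine ⟨_, (EuclideanSpace.basisFun n 𝕜).toMatrix_orthonormalBasis_mem_unitary b, ?_⟩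
  ext i j
  rw [mul_diagonal, ← hnorm, mul_comm]
  exact congr_arg (· i) (hb j)

theorem exists_mem_unitaryGroup_eq_mul_diagonal_mul_star_eigenvectorUnitary
    (X : Matrix n n 𝕜) :
    ∃ W ∈ unitaryGroup n 𝕜, X = W *
      diagonal (fun j => ((√((posSemidef_conjTranspose_mul_self X).1.eigenvalues j) : ℝ) : 𝕜)) *
        star ((posSemidef_conjTranspose_mul_self X).1.eigenvectorUnitary : Matrix n n 𝕜) := by
  set hH := (posSemidef_conjTranspose_mul_self X).1
  set U : Matrix n n 𝕜 := ↑hH.eigenvectorUnitary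
  have hdiag : (X * U)ᴴ * (X * U) = diagonal (RCLike.ofReal ∘ hH.eigenvalues) := by
    rw [← hH.conjStarAlgAut_star_eigenvectorUnitary, Unitary.conjStarAlgAut_star_apply,
      conjTranspose_mul, ← star_eq_conjTranspose]
    noncomm_ring
  obtain ⟨W, hW, hXU⟩ :=
    exists_mem_unitaryGroup_eq_mul_diagonal_of_conjTranspose_mul_self_eq_diagonal hdiag
  refine ⟨W, hW, ?_⟩
  rw [← hXU, Matrix.mul_assoc, mem_unitaryGroup_iff.mp (Subtype.property _), Matrix.mul_one]

end Matrix

/-- The trace norm `Tr √(Xᴴ X)` of a square complex matrix `X` is the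
greatest value of `|Tr (V * X)|` over unitary matrices `V`; the maximum is attained
by the inverse of the unitary factor in the polar decomposition of `X`. -/
theorem trace_norm_isGreatest_abs_trace_unitary_mul
    {d : ℕ} (X : Matrix (Fin d) (Fin d) ℂ) :
    IsGreatest
      {r : ℝ | ∃ V ∈ Matrix.unitaryGroup (Fin d) ℂ, r = ‖Matrix.trace (V * X)‖}
      ((Matrix.trace ((Matrix.posSemidef_conjTranspose_mul_self X).sqrt)).re) := by
  obtain ⟨W, hW, hX⟩ := exists_mem_unitaryGroup_eq_mul_diagonal_mul_star_eigenvectorUnitary X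
  rw [← RCLike.re_eq_complex_re, PosSemidef.re_trace_sqrt]
  exact isGreatest_norm_trace_unitary_mul_of_eq_mul_diagonal_mul_star hW (Subtype.property _)
    (fun _ => Real.sqrt_nonneg _) hX
end

section
/- Let μ be the Haar probability measure on Matrix.unitaryGroup (Fin d_A) ℂ and define, for a (d_A·d_B) × (d_A·d_B) complex matrix ρ (indexed by Fin d_A × Fin d_B), the symmetry of entanglement E_S(ρ) = ∫ (sup over unitary V ∈ Matrix.unitaryGroup (Fin d_B) ℂ of |Tr ((Uᴴ ⊗ₖ V) * ρ)|) dμ(U). Then E_S is convex: for nonnegative reals p_1, …, p_n and matrices ρ_1, …, ρ_n, E_S(Σ_i p_i • ρ_i) ≤ Σ_i p_i · E_S(ρ_i). -/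
/-!
For fixed `U`, `A ↦ max_V |Tr((Uᴴ ⊗ V) A)|` is a supremum of seminorms of `A`, hence convex.
It depends continuously on `U`, so it is integrable over the compact unitary group against any
finite measure, and integrating the pointwise inequality gives convexity of `E_S`.
-/

open Matrix Kronecker MeasureTheory

open scoped Matrix.Norms.Elementwise in
instance Matrix.unitaryGroup.instCompactSpace {𝕜 n : Type*} [RCLike 𝕜] [Fintype n]
    [DecidableEq n] : CompactSpace (unitaryGroup n 𝕜) :=
  isCompact_iff_compactSpace.mp <| (isCompact_closedBall (0 : Matrix n n 𝕜) 1).of_isClosed_subset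
    (isClosed_unitary (R := Matrix n n 𝕜)) fun _ hU =>
      mem_closedBall_zero_iff.2 (entrywise_sup_norm_bound_of_unitary hU)

theorem Continuous.matrix_kronecker {X R l m n p : Type*} [TopologicalSpace X] [Mul R]
    [TopologicalSpace R] [ContinuousMul R] {f : X → Matrix l m R} {g : X → Matrix n p R}
    (hf : Continuous f) (hg : Continuous g) : Continuous fun x => f x ⊗ₖ g x :=
  continuous_matrix fun i j => (hf.matrix_elem i.1 j.1).mul (hg.matrix_elem i.2 j.2)

section LocalOverlap

variable {m k : Type*} [Fintype m] [DecidableEq m] [Fintype k] [DecidableEq k]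

noncomputable def maxLocalOverlap (A : Matrix (m × k) (m × k) ℂ) (U : unitaryGroup m ℂ) : ℝ :=
  ⨆ V : unitaryGroup k ℂ, ‖trace (((U : Matrix m m ℂ)ᴴ ⊗ₖ (V : Matrix k k ℂ)) * A)‖

noncomputable def symmetryOfEntanglement [MeasurableSpace (unitaryGroup m ℂ)]
    (μ : Measure (unitaryGroup m ℂ)) (A : Matrix (m × k) (m × k) ℂ) : ℝ :=
  ∫ U, maxLocalOverlap A U ∂μ

/-- Currying turns the supremum over `V` into the sup norm of `C(U(k), ℂ)`, which gives
continuity in `U` and boundedness in `V` at once. -/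
noncomputable def localOverlap (A : Matrix (m × k) (m × k) ℂ) :
    C(unitaryGroup m ℂ, C(unitaryGroup k ℂ, ℂ)) :=
  ContinuousMap.curry
    ⟨fun W => trace (((W.1 : Matrix m m ℂ)ᴴ ⊗ₖ (W.2 : Matrix k k ℂ)) * A),
      (((continuous_subtype_val.comp continuous_fst).matrix_conjTranspose.matrix_kronecker
        (continuous_subtype_val.comp continuous_snd)).matrix_mul continuous_const).matrix_trace⟩

theorem maxLocalOverlap_eq_norm (A : Matrix (m × k) (m × k) ℂ) (U : unitaryGroup m ℂ) :
    maxLocalOverlap A U = ‖localOverlap A U‖ :=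
  (ContinuousMap.norm_eq_iSup_norm (localOverlap A U)).symm

theorem continuous_maxLocalOverlap (A : Matrix (m × k) (m × k) ℂ) :
    Continuous (maxLocalOverlap A) := by
  simpa only [funext (maxLocalOverlap_eq_norm A)] using (localOverlap A).continuous.norm

theorem norm_trace_le_maxLocalOverlap (A : Matrix (m × k) (m × k) ℂ) (U : unitaryGroup m ℂ)
    (V : unitaryGroup k ℂ) :
    ‖trace (((U : Matrix m m ℂ)ᴴ ⊗ₖ (V : Matrix k k ℂ)) * A)‖ ≤ maxLocalOverlap A U := by
  rw [maxLocalOverlap_eq_norm]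
  exact (localOverlap A U).norm_coe_le_norm V

theorem maxLocalOverlap_nonneg (A : Matrix (m × k) (m × k) ℂ) (U : unitaryGroup m ℂ) :
    0 ≤ maxLocalOverlap A U :=
  (maxLocalOverlap_eq_norm A U).symm ▸ norm_nonneg _

theorem maxLocalOverlap_sum_smul_le {ι : Type*} [Fintype ι]
    (ρ : ι → Matrix (m × k) (m × k) ℂ) (p : ι → ℝ) (hp : ∀ i, 0 ≤ p i) (U : unitaryGroup m ℂ) :
    maxLocalOverlap (∑ i, (p i : ℂ) • ρ i) U ≤ ∑ i, p i * maxLocalOverlap (ρ i) U := by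
  refine ciSup_le fun V => ?_
  calc ‖trace (((U : Matrix m m ℂ)ᴴ ⊗ₖ (V : Matrix k k ℂ)) * ∑ i, (p i : ℂ) • ρ i)‖
      = ‖∑ i, (p i : ℂ) * trace (((U : Matrix m m ℂ)ᴴ ⊗ₖ (V : Matrix k k ℂ)) * ρ i)‖ := by
        simp only [Finset.mul_sum, mul_smul_comm, trace_sum, trace_smul, smul_eq_mul]
    _ ≤ ∑ i, p i * ‖trace (((U : Matrix m m ℂ)ᴴ ⊗ₖ (V : Matrix k k ℂ)) * ρ i)‖ := by
        refine (norm_sum_le _ _).trans_eq (Finset.sum_congr rfl fun i _ => ?_)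
        rw [norm_mul, Complex.norm_of_nonneg (hp i)]
    _ ≤ ∑ i, p i * maxLocalOverlap (ρ i) U :=
        Finset.sum_le_sum fun i _ =>
          mul_le_mul_of_nonneg_left (norm_trace_le_maxLocalOverlap _ U V) (hp i)

variable [MeasurableSpace (unitaryGroup m ℂ)] [OpensMeasurableSpace (unitaryGroup m ℂ)]
  (μ : Measure (unitaryGroup m ℂ)) [IsFiniteMeasure μ]

theorem integrable_maxLocalOverlap (A : Matrix (m × k) (m × k) ℂ) :
    Integrable (maxLocalOverlap A) μ :=
  (continuous_maxLocalOverlap A).integrable_of_hasCompactSupport (.of_compactSpace _)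

theorem symmetryOfEntanglement_sum_smul_le {ι : Type*} [Fintype ι]
    (ρ : ι → Matrix (m × k) (m × k) ℂ) (p : ι → ℝ) (hp : ∀ i, 0 ≤ p i) :
    symmetryOfEntanglement μ (∑ i, (p i : ℂ) • ρ i) ≤
      ∑ i, p i * symmetryOfEntanglement μ (ρ i) := by
  have hint : Integrable (fun U => ∑ i, p i * maxLocalOverlap (ρ i) U) μ :=
    integrable_finsetSum _ fun i _ => (integrable_maxLocalOverlap μ (ρ i)).const_mul (p i)
  calc symmetryOfEntanglement μ (∑ i, (p i : ℂ) • ρ i)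
      ≤ ∫ U, ∑ i, p i * maxLocalOverlap (ρ i) U ∂μ :=
        integral_mono_of_nonneg (.of_forall (maxLocalOverlap_nonneg _)) hint
          (.of_forall (maxLocalOverlap_sum_smul_le ρ p hp))
    _ = ∑ i, p i * symmetryOfEntanglement μ (ρ i) := by
        rw [integral_finsetSum _ fun i _ => (integrable_maxLocalOverlap μ (ρ i)).const_mul (p i)]
        simp only [integral_const_mul, symmetryOfEntanglement]

end LocalOverlap

theorem symmetry_of_entanglement_convex_general
    {dA dB n : ℕ}
    [MeasurableSpace (Matrix.unitaryGroup (Fin dA) ℂ)]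
    [BorelSpace (Matrix.unitaryGroup (Fin dA) ℂ)]
    (μ : Measure (Matrix.unitaryGroup (Fin dA) ℂ))
    [IsProbabilityMeasure μ]
    (ρ : Fin n → Matrix (Fin dA × Fin dB) (Fin dA × Fin dB) ℂ)
    (p : Fin n → ℝ) (hp : ∀ i, 0 ≤ p i) :
    (∫ U : Matrix.unitaryGroup (Fin dA) ℂ,
        (⨆ V : Matrix.unitaryGroup (Fin dB) ℂ,
          ‖Matrix.trace (((U : Matrix (Fin dA) (Fin dA) ℂ)ᴴ ⊗ₖ
            (V : Matrix (Fin dB) (Fin dB) ℂ)) * (∑ i, (p i : ℂ) • ρ i))‖) ∂μ) ≤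
      ∑ i, p i *
        (∫ U : Matrix.unitaryGroup (Fin dA) ℂ,
          (⨆ V : Matrix.unitaryGroup (Fin dB) ℂ,
            ‖Matrix.trace (((U : Matrix (Fin dA) (Fin dA) ℂ)ᴴ ⊗ₖ
              (V : Matrix (Fin dB) (Fin dB) ℂ)) * ρ i)‖) ∂μ) :=
  symmetryOfEntanglement_sum_smul_le μ ρ p hp

/-- The symmetry of entanglement
`E_S(ρ) = ∫ sup_V |Tr((Uᴴ ⊗ₖ V) ρ)| dμ(U)`, with `μ` the Haar probability measure on
the unitary group of subsystem `A`, is convex: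
`E_S(∑ p_i ρ_i) ≤ ∑ p_i E_S(ρ_i)` for nonnegative weights `p_i`. -/
theorem symmetry_of_entanglement_convex
    {dA dB n : ℕ}
    [MeasurableSpace (Matrix.unitaryGroup (Fin dA) ℂ)]
    [BorelSpace (Matrix.unitaryGroup (Fin dA) ℂ)]
    (μ : Measure (Matrix.unitaryGroup (Fin dA) ℂ))
    [μ.IsHaarMeasure] [IsProbabilityMeasure μ]
    (ρ : Fin n → Matrix (Fin dA × Fin dB) (Fin dA × Fin dB) ℂ)
    (p : Fin n → ℝ) (hp : ∀ i, 0 ≤ p i) :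
    (∫ U : Matrix.unitaryGroup (Fin dA) ℂ,
        (⨆ V : Matrix.unitaryGroup (Fin dB) ℂ,
          ‖Matrix.trace (((U : Matrix (Fin dA) (Fin dA) ℂ)ᴴ ⊗ₖ
            (V : Matrix (Fin dB) (Fin dB) ℂ)) * (∑ i, (p i : ℂ) • ρ i))‖) ∂μ) ≤
      ∑ i, p i *
        (∫ U : Matrix.unitaryGroup (Fin dA) ℂ,
          (⨆ V : Matrix.unitaryGroup (Fin dB) ℂ,
            ‖Matrix.trace (((U : Matrix (Fin dA) (Fin dA) ℂ)ᴴ ⊗ₖ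
              (V : Matrix (Fin dB) (Fin dB) ℂ)) * ρ i)‖) ∂μ) :=
  symmetry_of_entanglement_convex_general μ ρ p hp
end

section
/- Let Σ be a d × d diagonal complex matrix with nonnegative real diagonal entries σ_1, …, σ_d. Then sup over unitary V of |Tr(V * Σ * U^* * Σ)| = 1 holds for every unitary U together with Σ_i σ_i² = 1 if and only if Σ = (1/√d) • 1; that is, a normalized bipartite pure state satisfies M(U) = 1 for all unitaries U if and only if it is maximally entangled. -/
open Matrix ComplexOrder

private theorem entryNormLe' {d : ℕ} {U : Matrix (Fin d) (Fin d) ℂ}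
    (hU : U ∈ Matrix.unitaryGroup (Fin d) ℂ) (i j : Fin d) : ‖U i j‖ ≤ 1 := by
  have h : (U * Uᴴ) i i = 1 := by
    have := Matrix.mem_unitaryGroup_iff.mp hU
    rw [Matrix.star_eq_conjTranspose] at this
    rw [this]; simp [Matrix.one_apply]
  have h2 : ∑ k, (‖U i k‖^2 : ℝ) = 1 := by
    have h' : ((∑ k, (‖U i k‖^2 : ℝ) : ℝ) : ℂ) = 1 := by
      push_cast
      rw [← h]
      simp only [Matrix.mul_apply, Matrix.conjTranspose_apply, RCLike.star_def,
        Complex.mul_conj, Complex.sq_norm]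
      norm_cast
      simp [Complex.sq_norm]
    exact_mod_cast h'
  have h3 : ‖U i j‖^2 ≤ 1 := by
    rw [← h2]
    exact Finset.single_le_sum (fun k _ => sq_nonneg (‖U i k‖)) (Finset.mem_univ j)
  nlinarith [norm_nonneg (U i j)]

private theorem traceFormula' {d : ℕ} (V W : Matrix (Fin d) (Fin d) ℂ) (σ : Fin d → ℝ) :
    Matrix.trace (V * Matrix.diagonal (fun i => (σ i : ℂ)) * W * Matrix.diagonal (fun i => (σ i : ℂ)))
    = ∑ k, (∑ l, V k l * (σ l : ℂ) * W l k) * (σ k : ℂ) := by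
  simp only [Matrix.trace, Matrix.diag, Matrix.mul_diagonal, Matrix.mul_apply,
    Matrix.diagonal_apply]
  refine Finset.sum_congr rfl fun k _ => ?_
  simp [Finset.sum_mul]

private theorem permUnitary' {d : ℕ} (e : Equiv.Perm (Fin d)) :
    (Matrix.of fun k l => if e k = l then (1:ℂ) else 0) ∈ Matrix.unitaryGroup (Fin d) ℂ := by
  rw [Matrix.mem_unitaryGroup_iff, Matrix.star_eq_conjTranspose]
  ext a b
  simp [Matrix.mul_apply, Matrix.conjTranspose_apply, Matrix.one_apply, apply_ite,
    Finset.sum_ite_eq, EmbeddingLike.apply_eq_iff_eq]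

private theorem permConj' {d : ℕ} (e : Equiv.Perm (Fin d)) :
    ((Matrix.of fun k l => if e k = l then (1:ℂ) else 0)ᴴᵀ)
      = Matrix.of fun k l => if e k = l then (1:ℂ) else 0 := by
  ext a b
  simp [Matrix.conjTranspose_apply, Matrix.transpose_apply, apply_ite]

private theorem conjTT' {d : ℕ} (U : Matrix (Fin d) (Fin d) ℂ) : Uᵀᴴ = Uᴴᵀ := by
  ext a b
  simp [Matrix.conjTranspose_apply, Matrix.transpose_apply]

private theorem transposeMemUnitary' {d : ℕ} {U : Matrix (Fin d) (Fin d) ℂ}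
    (hU : U ∈ Matrix.unitaryGroup (Fin d) ℂ) : Uᵀ ∈ Matrix.unitaryGroup (Fin d) ℂ := by
  have h1 := Matrix.mem_unitaryGroup_iff'.mp hU
  rw [Matrix.star_eq_conjTranspose] at h1
  rw [Matrix.mem_unitaryGroup_iff, Matrix.star_eq_conjTranspose, conjTT',
    ← Matrix.transpose_mul, h1, Matrix.transpose_one]

/-- A normalized bipartite pure state with Schmidt matrix `S = diagonal σ`
(`σ_i ≥ 0`) satisfies `M(U) = sup_V |Tr(V S U^* S)| = 1` for every unitary `U`
(together with the normalization `∑ σ_i² = 1`) iff it is maximally entangled,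
`S = (1/√d) • 1`. -/
theorem max_fidelity_one_for_all_unitaries_iff_maximally_entangled
    {d : ℕ} (hd : 1 ≤ d) (σ : Fin d → ℝ) (hσ : ∀ i, 0 ≤ σ i)
    (S : Matrix (Fin d) (Fin d) ℂ) (hS : S = Matrix.diagonal (fun i => (σ i : ℂ))) :
    ((∑ i, σ i ^ 2 = 1) ∧
      ∀ U ∈ Matrix.unitaryGroup (Fin d) ℂ,
        (⨆ V : Matrix.unitaryGroup (Fin d) ℂ,
          ‖Matrix.trace ((V : Matrix (Fin d) (Fin d) ℂ) * S * Uᴴᵀ * S)‖) = 1) ↔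
      S = ((1 / Real.sqrt d : ℝ) : ℂ) • (1 : Matrix (Fin d) (Fin d) ℂ) := by
  have hd0 : (0:ℝ) < (d:ℝ) := by exact_mod_cast hd
  have hsq : Real.sqrt d ≠ 0 := by positivity
  constructor
  · rintro ⟨hnorm, hsup⟩
    have key : ∀ i j, σ i = σ j := by
      intro i j
      by_cases hij : i = j
      · rw [hij]
      set e := Equiv.swap i j with he
      set P := (Matrix.of fun k l => if e k = l then (1:ℂ) else 0) with hPdef
      have hs := hsup P (permUnitary' e)
      have hb : ∀ V : Matrix.unitaryGroup (Fin d) ℂ,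
          ‖Matrix.trace ((V : Matrix (Fin d) (Fin d) ℂ) * S * Pᴴᵀ * S)‖
            ≤ ∑ l, σ l * σ (e l) := by
        intro V
        rw [hPdef, permConj', hS, traceFormula']
        calc ‖∑ k, (∑ l, (V : Matrix (Fin d) (Fin d) ℂ) k l * (σ l : ℂ)
                * (Matrix.of fun k l => if e k = l then (1:ℂ) else 0) l k) * (σ k : ℂ)‖
            ≤ ∑ k, ∑ l, ‖(V : Matrix (Fin d) (Fin d) ℂ) k l * (σ l : ℂ)
                * (Matrix.of fun k l => if e k = l then (1:ℂ) else 0) l k * (σ k : ℂ)‖ := by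
              refine (norm_sum_le _ _).trans (Finset.sum_le_sum fun k _ => ?_)
              rw [Finset.sum_mul]
              exact norm_sum_le _ _
          _ ≤ ∑ k, ∑ l, σ l * ((if e l = k then (1:ℝ) else 0) * σ k) := by
              refine Finset.sum_le_sum fun k _ => Finset.sum_le_sum fun l _ => ?_
              simp only [Matrix.of_apply, norm_mul, Complex.norm_real, Real.norm_eq_abs]
              rw [abs_of_nonneg (hσ l), abs_of_nonneg (hσ k)]
              have h1 : ‖(if e l = k then (1:ℂ) else 0)‖ = (if e l = k then (1:ℝ) else 0) := by
                split <;> simp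
              rw [h1]
              have := entryNormLe' V.2 k l
              have h0 : (0:ℝ) ≤ (if e l = k then (1:ℝ) else 0) := by split <;> norm_num
              nlinarith [hσ l, hσ k, norm_nonneg ((V : Matrix (Fin d) (Fin d) ℂ) k l),
                mul_nonneg (mul_nonneg (hσ l) h0) (hσ k)]
          _ = ∑ l, σ l * σ (e l) := by
              rw [Finset.sum_comm]
              refine Finset.sum_congr rfl fun l _ => ?_
              simp [Finset.mul_sum, ite_mul, mul_ite, Finset.sum_ite_eq]
      have h1 : (1:ℝ) ≤ ∑ l, σ l * σ (e l) := hs ▸ ciSup_le hb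
      have h2 : ∑ l, σ l * σ (e l) = 1 - (σ i - σ j)^2 := by
        have hz : ∀ l ∈ Finset.univ, l ∉ ({i, j} : Finset (Fin d)) →
            σ l * σ (e l) - σ l ^ 2 = 0 := by
          intro l _ hl
          simp only [Finset.mem_insert, Finset.mem_singleton, not_or] at hl
          rw [he, Equiv.swap_apply_of_ne_of_ne hl.1 hl.2]; ring
        have := Finset.sum_subset (Finset.subset_univ ({i, j} : Finset (Fin d))) hz
        rw [Finset.sum_pair hij, he, Equiv.swap_apply_left, Equiv.swap_apply_right] at this
        have hsum : ∑ l, (σ l * σ (e l) - σ l ^ 2)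
            = (σ i * σ j - σ i ^ 2) + (σ j * σ i - σ j ^ 2) := this.symm
        rw [Finset.sum_sub_distrib, hnorm] at hsum
        linarith [hsum]
      have : (σ i - σ j)^2 ≤ 0 := by linarith
      have := le_antisymm this (sq_nonneg _)
      have := pow_eq_zero_iff (n := 2) (by norm_num) |>.mp this
      linarith
    -- all σ equal; compute value
    have i0 : Fin d := ⟨0, hd⟩
    have hval : ∀ k, σ k = 1 / Real.sqrt d := by
      have hsum : (d:ℝ) * σ i0 ^ 2 = 1 := by
        rw [← hnorm]
        rw [Finset.sum_congr rfl fun k _ => by rw [key k i0]]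
        simp [Finset.card_univ, mul_comm]
      intro k
      rw [key k i0]
      have h2 : σ i0 ^ 2 = 1 / (d:ℝ) := by field_simp at hsum ⊢; linarith
      have : σ i0 = Real.sqrt (1 / (d:ℝ)) := by
        rw [← h2, Real.sqrt_sq (hσ i0)]
      rw [this, one_div, one_div, Real.sqrt_inv]
    rw [hS]
    ext a b
    by_cases hab : a = b
    · subst hab; simp [Matrix.diagonal_apply_eq, Matrix.one_apply, hval a]
    · simp [Matrix.diagonal_apply_ne _ hab, Matrix.one_apply_ne hab]
  · intro h
    have hval : ∀ k, σ k = 1 / Real.sqrt d := by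
      intro k
      have := congrFun (congrFun (hS ▸ h) k) k
      simp only [Matrix.diagonal_apply_eq, Matrix.smul_apply, Matrix.one_apply_eq,
        smul_eq_mul, mul_one] at this
      exact_mod_cast this
    have hsqd : (1 / Real.sqrt d)^2 = 1 / (d:ℝ) := by
      rw [div_pow, one_pow, Real.sq_sqrt hd0.le]
    have hnorm : ∑ i, σ i ^ 2 = 1 := by
      rw [Finset.sum_congr rfl fun k _ => by rw [hval k, hsqd]]
      simp [Finset.card_univ]
      field_simp
    refine ⟨hnorm, fun U hU => ?_⟩
    have hcc : ((1 / Real.sqrt d : ℝ) : ℂ) * ((1 / Real.sqrt d : ℝ) : ℂ) = ((1/(d:ℝ) : ℝ) : ℂ) := by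
      rw [← Complex.ofReal_mul]
      congr 1
      rw [← sq, hsqd]
    have htr : ∀ V : Matrix (Fin d) (Fin d) ℂ,
        Matrix.trace (V * S * Uᴴᵀ * S) = ((1/(d:ℝ) : ℝ) : ℂ) * Matrix.trace (V * Uᴴᵀ) := by
      intro V
      rw [h]
      simp only [Matrix.mul_smul, Matrix.smul_mul, Matrix.mul_one, Matrix.trace_smul,
        smul_smul, smul_eq_mul]
      rw [hcc]
    have hUconj : Uᴴᵀ ∈ Matrix.unitaryGroup (Fin d) ℂ := by
      apply transposeMemUnitary'
      exact Unitary.star_mem hU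
    have hboundAll : ∀ V : Matrix.unitaryGroup (Fin d) ℂ,
        ‖Matrix.trace ((V : Matrix (Fin d) (Fin d) ℂ) * S * Uᴴᵀ * S)‖ ≤ 1 := by
      intro V
      rw [htr, norm_mul]
      have hW : (V : Matrix (Fin d) (Fin d) ℂ) * Uᴴᵀ ∈ Matrix.unitaryGroup (Fin d) ℂ :=
        mul_mem V.2 hUconj
      have htrb : ‖Matrix.trace ((V : Matrix (Fin d) (Fin d) ℂ) * Uᴴᵀ)‖ ≤ (d:ℝ) := by
        refine (norm_sum_le _ _).trans ?_
        calc ∑ k, ‖((V : Matrix (Fin d) (Fin d) ℂ) * Uᴴᵀ) k k‖ ≤ ∑ _k : Fin d, (1:ℝ) :=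
              Finset.sum_le_sum fun k _ => entryNormLe' hW k k
          _ = (d:ℝ) := by simp
      have hn : ‖((1/(d:ℝ) : ℝ) : ℂ)‖ = 1/(d:ℝ) := by
        rw [Complex.norm_real, Real.norm_eq_abs, abs_of_nonneg (by positivity)]
      rw [hn]
      calc 1/(d:ℝ) * ‖Matrix.trace ((V : Matrix (Fin d) (Fin d) ℂ) * Uᴴᵀ)‖
          ≤ 1/(d:ℝ) * (d:ℝ) := by
            apply mul_le_mul_of_nonneg_left htrb (by positivity)
        _ = 1 := by field_simp
    apply le_antisymm
    · exact ciSup_le hboundAll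
    · have hUt : Uᵀ ∈ Matrix.unitaryGroup (Fin d) ℂ := transposeMemUnitary' hU
      have hprod : Uᵀ * Uᴴᵀ = 1 := by
        have h1 := Matrix.mem_unitaryGroup_iff'.mp hU
        rw [Matrix.star_eq_conjTranspose] at h1
        rw [← Matrix.transpose_mul, h1, Matrix.transpose_one]
      have hv : ‖Matrix.trace ((Uᵀ : Matrix (Fin d) (Fin d) ℂ) * S * Uᴴᵀ * S)‖ = 1 := by
        have hn : ‖((1/(d:ℝ) : ℝ) : ℂ)‖ = 1/(d:ℝ) := by
          rw [Complex.norm_real, Real.norm_eq_abs, abs_of_nonneg (by positivity)]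
        rw [htr Uᵀ, hprod, Matrix.trace_one, norm_mul, hn]
        simp only [Complex.norm_natCast, Fintype.card_fin]
        field_simp
      have hbdd : BddAbove (Set.range fun V : Matrix.unitaryGroup (Fin d) ℂ =>
          ‖Matrix.trace ((V : Matrix (Fin d) (Fin d) ℂ) * S * Uᴴᵀ * S)‖) := by
        refine ⟨1, ?_⟩
        rintro x ⟨V, rfl⟩
        exact hboundAll V
      have := le_ciSup hbdd (⟨Uᵀ, hUt⟩ : Matrix.unitaryGroup (Fin d) ℂ)
      rwa [hv] at this
end
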